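/- arXiv:2404.13877 — 2 statements merged into one kernel-verified Lean document; each statement's English description precedes it below -/
import Mathlib

section
/- Let J ⊆ (ℝ,≤)² be a connected and convex subposet and M:J→vect_F a functor such that M(i≤j) is an isomorphism for all i≤j in J. Then for any a,b ∈ J and any two zigzag paths p and q in J from a to b, the composites along the two paths agree: M(a⇝b along p) = M(a⇝b along q). -/
/-- A persistence module over a preorder `P` with coefficients in a field `F`:
a functor `(P,≤) → Vect_F`, given by vector spaces `V p` and linear maps
`map : i ≤ j → (V i →ₗ[F] V j)` satisfying the functoriality equations. -/
structure PersistenceModule (F : Type) [Field F] (P : Type) [Preorder P] where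
  V : P → Type
  [addCommGroup : ∀ p, AddCommGroup (V p)]
  [module : ∀ p, Module F (V p)]
  map : ∀ {i j : P}, i ≤ j → (V i →ₗ[F] V j)
  map_id : ∀ i : P, map (le_refl i) = LinearMap.id
  map_comp : ∀ {i j k : P} (hij : i ≤ j) (hjk : j ≤ k),
    (map hjk).comp (map hij) = map (hij.trans hjk)

attribute [instance] PersistenceModule.addCommGroup PersistenceModule.module

/-- A zigzag path `a - x₁ - ⋯ - xₙ - b` in a preorder, where each consecutive
pair of points is comparable. -/
inductive Zigzag (P : Type) [Preorder P] : P → P → Type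
  | single (a : P) : Zigzag P a a
  | consLe {a b c : P} (h : a ≤ b) (p : Zigzag P b c) : Zigzag P a c
  | consGe {a b c : P} (h : b ≤ a) (p : Zigzag P b c) : Zigzag P a c

/-- Convexity of a subset of a poset: `i ≤ j ≤ k` with `i, k ∈ J` implies `j ∈ J`. -/
def PosetConvex {P : Type} [Preorder P] (J : Set P) : Prop :=
  ∀ i ∈ J, ∀ k ∈ J, ∀ j : P, i ≤ j → j ≤ k → j ∈ J

/-- Connectedness: any two points of `J` are joined by a finite zigzag path inside `J`. -/
def ZigzagConnected {P : Type} [Preorder P] (J : Set P) : Prop :=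
  ∀ a b : J, Nonempty (Zigzag (↥J) a b)

/-- The composite `M(a ⇝ b)` along a zigzag path, using `M̂(i,j) = M(i≤j)` on
good arrows and `M̂(i,j) = M(j≤i)⁻¹` on bad arrows. -/
noncomputable def zigzagMap {F : Type} [Field F] {P : Type} [Preorder P]
    (M : PersistenceModule F P)
    (hiso : ∀ (i j : P) (h : i ≤ j), Function.Bijective (M.map h)) :
    {a b : P} → Zigzag P a b → (M.V a →ₗ[F] M.V b)
  | _, _, .single _ => LinearMap.id
  | _, _, .consLe h p => (zigzagMap M hiso p).comp (M.map h)
  | _, _, .consGe h p =>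
      (zigzagMap M hiso p).comp
        ((LinearEquiv.ofBijective (M.map h) (hiso _ _ h)).symm.toLinearMap)


section Infra

variable {F : Type} [Field F] {P : Type} [Preorder P]

namespace Zigzag

def append : {a b c : P} → Zigzag P a b → Zigzag P b c → Zigzag P a c
  | _, _, _, .single _, q => q
  | _, _, _, .consLe h p, q => .consLe h (p.append q)
  | _, _, _, .consGe h p, q => .consGe h (p.append q)

def rev : {a b : P} → Zigzag P a b → Zigzag P b a
  | _, _, .single a => .single a
  | _, _, .consLe h p => (rev p).append (.consGe h (.single _))
  | _, _, .consGe h p => (rev p).append (.consLe h (.single _))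

def zlen : {a b : P} → Zigzag P a b → ℕ
  | _, _, .single _ => 0
  | _, _, .consLe _ p => zlen p + 1
  | _, _, .consGe _ p => zlen p + 1

@[simp] lemma zlen_single (a : P) : zlen (.single a) = 0 := rfl
@[simp] lemma zlen_consLe {a b c : P} (h : a ≤ b) (p : Zigzag P b c) :
    zlen (.consLe h p) = zlen p + 1 := rfl
@[simp] lemma zlen_consGe {a b c : P} (h : b ≤ a) (p : Zigzag P b c) :
    zlen (.consGe h p) = zlen p + 1 := rfl

end Zigzag

variable (M : PersistenceModule F P)
  (hiso : ∀ (i j : P) (h : i ≤ j), Function.Bijective (M.map h))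

/-- The inverse of a structure map. -/
noncomputable def pinv {i j : P} (h : i ≤ j) : M.V j →ₗ[F] M.V i :=
  (LinearEquiv.ofBijective (M.map h) (hiso i j h)).symm.toLinearMap

lemma map_pinv_apply {i j : P} (h : i ≤ j) (x : M.V j) :
    M.map h (pinv M hiso h x) = x := by
  exact (LinearEquiv.ofBijective (M.map h) (hiso i j h)).apply_symm_apply x

lemma pinv_map_apply {i j : P} (h : i ≤ j) (x : M.V i) :
    pinv M hiso h (M.map h x) = x := by
  exact (LinearEquiv.ofBijective (M.map h) (hiso i j h)).symm_apply_apply x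

lemma zm_single (a : P) : zigzagMap M hiso (.single a) = LinearMap.id := rfl

lemma zm_consLe {a b c : P} (h : a ≤ b) (p : Zigzag P b c) :
    zigzagMap M hiso (.consLe h p) = (zigzagMap M hiso p).comp (M.map h) := rfl

lemma zm_consGe {a b c : P} (h : b ≤ a) (p : Zigzag P b c) :
    zigzagMap M hiso (.consGe h p) = (zigzagMap M hiso p).comp (pinv M hiso h) := rfl

lemma zm_append : ∀ {a b c : P} (p : Zigzag P a b) (q : Zigzag P b c),
    zigzagMap M hiso (p.append q) = (zigzagMap M hiso q).comp (zigzagMap M hiso p)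
  | _, _, _, .single _, q => by simp [Zigzag.append, zm_single]
  | _, _, _, .consLe h p, q => by
      simp [Zigzag.append, zm_consLe, zm_append p q, LinearMap.comp_assoc]
  | _, _, _, .consGe h p, q => by
      simp [Zigzag.append, zm_consGe, zm_append p q, LinearMap.comp_assoc]

lemma map_refl {a : P} (h : a ≤ a) : M.map h = LinearMap.id := M.map_id a

lemma pinv_refl {a : P} (h : a ≤ a) : pinv M hiso h = LinearMap.id := by
  ext x
  have : M.map h (pinv M hiso h x) = x := map_pinv_apply M hiso h x
  rwa [map_refl] at this

lemma zm_rev_comp : ∀ {a b : P} (p : Zigzag P a b),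
    (zigzagMap M hiso p.rev).comp (zigzagMap M hiso p) = LinearMap.id
  | _, _, .single _ => rfl
  | _, _, .consLe h p => by
      ext x
      have ihx := LinearMap.ext_iff.mp (zm_rev_comp p)
      simp only [LinearMap.comp_apply, LinearMap.id_apply] at ihx
      simp only [Zigzag.rev, zm_append, zm_consLe, zm_consGe, zm_single,
        LinearMap.comp_apply, LinearMap.id_apply, LinearMap.id_comp]
      rw [ihx, pinv_map_apply]
  | _, _, .consGe h p => by
      ext x
      have ihx := LinearMap.ext_iff.mp (zm_rev_comp p)
      simp only [LinearMap.comp_apply, LinearMap.id_apply] at ihx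
      simp only [Zigzag.rev, zm_append, zm_consLe, zm_consGe, zm_single,
        LinearMap.comp_apply, LinearMap.id_apply, LinearMap.id_comp]
      rw [ihx, map_pinv_apply]

lemma zm_comp_rev : ∀ {a b : P} (p : Zigzag P a b),
    (zigzagMap M hiso p).comp (zigzagMap M hiso p.rev) = LinearMap.id
  | _, _, .single _ => rfl
  | _, _, .consLe h p => by
      ext x
      have ihx := LinearMap.ext_iff.mp (zm_comp_rev p)
      simp only [LinearMap.comp_apply, LinearMap.id_apply] at ihx
      simp only [Zigzag.rev, zm_append, zm_consLe, zm_consGe, zm_single,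
        LinearMap.comp_apply, LinearMap.id_apply, LinearMap.id_comp]
      rw [map_pinv_apply, ihx]
  | _, _, .consGe h p => by
      ext x
      have ihx := LinearMap.ext_iff.mp (zm_comp_rev p)
      simp only [LinearMap.comp_apply, LinearMap.id_apply] at ihx
      simp only [Zigzag.rev, zm_append, zm_consLe, zm_consGe, zm_single,
        LinearMap.comp_apply, LinearMap.id_apply, LinearMap.id_comp]
      rw [pinv_map_apply, ihx]

end Infra

section Moves

variable {F : Type} [Field F] {P : Type} [Preorder P]
variable (M : PersistenceModule F P)
  (hiso : ∀ (i j : P) (h : i ≤ j), Function.Bijective (M.map h))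

lemma map_map_apply {i j k : P} (hij : i ≤ j) (hjk : j ≤ k) (x : M.V i) :
    M.map hjk (M.map hij x) = M.map (hij.trans hjk) x := by
  rw [← M.map_comp hij hjk]; rfl

lemma pinv_pinv_apply {i j k : P} (hij : i ≤ j) (hjk : j ≤ k) (x : M.V k) :
    pinv M hiso hij (pinv M hiso hjk x) = pinv M hiso (hij.trans hjk) x := by
  apply (hiso i k (hij.trans hjk)).injective
  rw [map_pinv_apply, ← map_map_apply M hij hjk, map_pinv_apply, map_pinv_apply]

lemma zm_peak_move {a y z j b : P} (ha : a ≤ y) (hz : z ≤ y) (ha' : a ≤ j) (hz' : z ≤ j)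
    (hj : j ≤ y) (q : Zigzag P z b) :
    zigzagMap M hiso (.consLe ha (.consGe hz q)) =
      zigzagMap M hiso (.consLe ha' (.consGe hz' q)) := by
  ext x
  simp only [zm_consLe, zm_consGe, LinearMap.comp_apply]
  apply congrArg
  apply (hiso z y hz).injective
  rw [map_pinv_apply]
  symm
  calc M.map hz (pinv M hiso hz' (M.map ha' x))
      = M.map hj (M.map hz' (pinv M hiso hz' (M.map ha' x))) := (map_map_apply M hz' hj _).symm
    _ = M.map hj (M.map ha' x) := by rw [map_pinv_apply]
    _ = M.map ha x := map_map_apply M ha' hj x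

lemma zm_valley_move {a y z m b : P} (hy : y ≤ a) (hz : y ≤ z) (hma : m ≤ a) (hym : y ≤ m)
    (hmz : m ≤ z) (q : Zigzag P z b) :
    zigzagMap M hiso (.consGe hy (.consLe hz q)) =
      zigzagMap M hiso (.consGe hma (.consLe hmz q)) := by
  ext x
  simp only [zm_consLe, zm_consGe, LinearMap.comp_apply]
  apply congrArg
  obtain ⟨u, rfl⟩ := (hiso y a hy).surjective x
  rw [pinv_map_apply]
  have e1 : M.map hy u = M.map hma (M.map hym u) := (map_map_apply M hym hma u).symm
  rw [e1, pinv_map_apply, map_map_apply]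

end Moves

section Plane

variable {J : Set (ℝ × ℝ)}

/-- first coordinate -/
def Xc (x : ↥J) : ℝ := x.1.1
/-- second coordinate -/
def Yc (x : ↥J) : ℝ := x.1.2

lemma le_iff' {x y : ↥J} : x ≤ y ↔ Xc x ≤ Xc y ∧ Yc x ≤ Yc y := Iff.rfl

lemma eq_of_coords {x y : ↥J} (hx : Xc x = Xc y) (hy : Yc x = Yc y) : x = y :=
  Subtype.ext (Prod.ext hx hy)

/-- the peak `y` over `a, z` is taut: it is the join. -/
def UpTaut (a y z : ↥J) : Prop :=
  Xc y = max (Xc a) (Xc z) ∧ Yc y = max (Yc a) (Yc z)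

/-- the valley `y` under `a, z` is taut: it is the meet. -/
def DnTaut (a y z : ↥J) : Prop :=
  Xc y = min (Xc a) (Xc z) ∧ Yc y = min (Yc a) (Yc z)

/-- defect-free zigzags: no removable/mergeable arrows, all peaks and valleys taut. -/
def DF : {a b : ↥J} → Zigzag (↥J) a b → Prop
  | _, _, .single _ => True
  | _, _, @Zigzag.consLe _ _ a y _ _ (.single _) => a ≠ y
  | _, _, @Zigzag.consGe _ _ a y _ _ (.single _) => a ≠ y
  | _, _, .consLe _ (.consLe _ _) => False
  | _, _, .consGe _ (.consGe _ _) => False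
  | _, _, @Zigzag.consLe _ _ a y _ _ (@Zigzag.consGe _ _ _ z _ h2 q) =>
      a ≠ y ∧ z ≠ y ∧ UpTaut a y z ∧ DF (.consGe h2 q)
  | _, _, @Zigzag.consGe _ _ a y _ _ (@Zigzag.consLe _ _ _ z _ h2 q) =>
      a ≠ y ∧ z ≠ y ∧ DnTaut a y z ∧ DF (.consLe h2 q)

/-- all coordinates of all vertices belong to `A`. -/
def Coords (A : Finset ℝ) : {a b : ↥J} → Zigzag (↥J) a b → Prop
  | _, _, .single a => Xc a ∈ A ∧ Yc a ∈ A
  | _, _, @Zigzag.consLe _ _ a _ _ _ p => (Xc a ∈ A ∧ Yc a ∈ A) ∧ Coords A p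
  | _, _, @Zigzag.consGe _ _ a _ _ _ p => (Xc a ∈ A ∧ Yc a ∈ A) ∧ Coords A p

/-- height of a vertex relative to the coordinate set `A`. -/
noncomputable def hgt (A : Finset ℝ) (x : ↥J) : ℕ :=
  (A.filter (fun t => t < Xc x)).card + (A.filter (fun t => t < Yc x)).card

lemma hgt_mono {A : Finset ℝ} {x y : ↥J} (h : x ≤ y) : hgt A x ≤ hgt A y := by
  obtain ⟨h1, h2⟩ := le_iff'.mp h
  refine Nat.add_le_add ?_ ?_ <;>
  · apply Finset.card_le_card
    intro t ht
    simp only [Finset.mem_filter] at *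
    exact ⟨ht.1, lt_of_lt_of_le ht.2 (by assumption)⟩

lemma card_filter_lt_lt {A : Finset ℝ} {s t : ℝ} (hs : s ∈ A) (hst : s < t) :
    (A.filter (fun r => r < s)).card < (A.filter (fun r => r < t)).card := by
  apply Finset.card_lt_card
  constructor
  · intro r hr
    simp only [Finset.mem_filter] at *
    exact ⟨hr.1, lt_trans hr.2 hst⟩
  · intro hsub
    have := hsub (Finset.mem_filter.mpr ⟨hs, hst⟩)
    simp only [Finset.mem_filter] at this
    exact lt_irrefl s this.2

lemma hgt_strict {A : Finset ℝ} {x y : ↥J} (h : x ≤ y) (hne : x ≠ y)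
    (hx1 : Xc x ∈ A) (hx2 : Yc x ∈ A) : hgt A x < hgt A y := by
  obtain ⟨h1, h2⟩ := le_iff'.mp h
  rcases eq_or_lt_of_le h1 with he1 | hl1
  · rcases eq_or_lt_of_le h2 with he2 | hl2
    · exact absurd (eq_of_coords he1 he2) hne
    · have := card_filter_lt_lt hx2 hl2
      have m1 : (A.filter (fun t => t < Xc x)).card ≤ (A.filter (fun t => t < Xc y)).card := by
        apply Finset.card_le_card
        intro t ht
        simp only [Finset.mem_filter] at *
        exact ⟨ht.1, lt_of_lt_of_le ht.2 h1⟩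
      unfold hgt; omega
  · have := card_filter_lt_lt hx1 hl1
    have m2 : (A.filter (fun t => t < Yc x)).card ≤ (A.filter (fun t => t < Yc y)).card := by
      apply Finset.card_le_card
      intro t ht
      simp only [Finset.mem_filter] at *
      exact ⟨ht.1, lt_of_lt_of_le ht.2 h2⟩
    unfold hgt; omega

/-- the weight measure of a zigzag. -/
noncomputable def mu (A : Finset ℝ) : {a b : ↥J} → Zigzag (↥J) a b → ℕ
  | _, _, .single _ => 0
  | _, _, @Zigzag.consLe _ _ a y _ _ p => (hgt A y - hgt A a) + mu A p + 1
  | _, _, @Zigzag.consGe _ _ a y _ _ p => (hgt A a - hgt A y) + mu A p + 1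

@[simp] lemma mu_single (A : Finset ℝ) (a : ↥J) : mu A (.single a) = 0 := rfl

@[simp] lemma mu_consLe (A : Finset ℝ) {a y b : ↥J} (h : a ≤ y) (p : Zigzag (↥J) y b) :
    mu A (.consLe h p) = (hgt A y - hgt A a) + mu A p + 1 := rfl

@[simp] lemma mu_consGe (A : Finset ℝ) {a y b : ↥J} (h : y ≤ a) (p : Zigzag (↥J) y b) :
    mu A (.consGe h p) = (hgt A a - hgt A y) + mu A p + 1 := rfl

lemma mu_append (A : Finset ℝ) : ∀ {a b c : ↥J} (p : Zigzag (↥J) a b) (q : Zigzag (↥J) b c),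
    mu A (p.append q) = mu A p + mu A q
  | _, _, _, .single _, q => by simp [Zigzag.append]
  | _, _, _, .consLe h p, q => by simp [Zigzag.append, mu_append A p q]; omega
  | _, _, _, .consGe h p, q => by simp [Zigzag.append, mu_append A p q]; omega

lemma coords_append (A : Finset ℝ) : ∀ {a b c : ↥J} {p : Zigzag (↥J) a b} {q : Zigzag (↥J) b c},
    Coords A p → Coords A q → Coords A (p.append q)
  | _, _, _, .single _, q, _, hq => by simpa [Zigzag.append] using hq
  | _, _, _, .consLe h p, q, hp, hq => ⟨hp.1, coords_append A hp.2 hq⟩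
  | _, _, _, .consGe h p, q, hp, hq => ⟨hp.1, coords_append A hp.2 hq⟩

lemma coords_start (A : Finset ℝ) : ∀ {a b : ↥J} (p : Zigzag (↥J) a b),
    Coords A p → Xc a ∈ A ∧ Yc a ∈ A
  | _, _, .single _, h => h
  | _, _, .consLe _ _, h => h.1
  | _, _, .consGe _ _, h => h.1

end Plane

section Plane2

variable {J : Set (ℝ × ℝ)}

@[simp] lemma DF_single (a : ↥J) : DF (.single a) := trivial

lemma DF_consLe_single {a y : ↥J} (h : a ≤ y) :
    DF (.consLe h (.single y)) = (a ≠ y) := rfl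

lemma DF_consGe_single {a y : ↥J} (h : y ≤ a) :
    DF (.consGe h (.single y)) = (a ≠ y) := rfl

lemma DF_consLe_consLe {a y z b : ↥J} (h : a ≤ y) (h2 : y ≤ z) (q : Zigzag (↥J) z b) :
    DF (.consLe h (.consLe h2 q)) = False := rfl

lemma DF_consGe_consGe {a y z b : ↥J} (h : y ≤ a) (h2 : z ≤ y) (q : Zigzag (↥J) z b) :
    DF (.consGe h (.consGe h2 q)) = False := rfl

lemma DF_consLe_consGe {a y z b : ↥J} (h : a ≤ y) (h2 : z ≤ y) (q : Zigzag (↥J) z b) :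
    DF (.consLe h (.consGe h2 q)) =
      (a ≠ y ∧ z ≠ y ∧ UpTaut a y z ∧ DF (.consGe h2 q)) := rfl

lemma DF_consGe_consLe {a y z b : ↥J} (h : y ≤ a) (h2 : y ≤ z) (q : Zigzag (↥J) z b) :
    DF (.consGe h (.consLe h2 q)) =
      (a ≠ y ∧ z ≠ y ∧ DnTaut a y z ∧ DF (.consLe h2 q)) := rfl

lemma Coords_single {A : Finset ℝ} (a : ↥J) :
    Coords A (.single a) = (Xc a ∈ A ∧ Yc a ∈ A) := rfl

lemma Coords_consLe {A : Finset ℝ} {a y b : ↥J} (h : a ≤ y) (p : Zigzag (↥J) y b) :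
    Coords A (.consLe h p) = ((Xc a ∈ A ∧ Yc a ∈ A) ∧ Coords A p) := rfl

lemma Coords_consGe {A : Finset ℝ} {a y b : ↥J} (h : y ≤ a) (p : Zigzag (↥J) y b) :
    Coords A (.consGe h p) = ((Xc a ∈ A ∧ Yc a ∈ A) ∧ Coords A p) := rfl

/-- The join of `a` and `z`, living in `J` thanks to convexity. -/
def jp (hconv : PosetConvex J) {a z y : ↥J} (ha : a ≤ y) (hz : z ≤ y) : ↥J :=
  ⟨(max (Xc a) (Xc z), max (Yc a) (Yc z)),
    hconv a.1 a.2 y.1 y.2 _ ⟨le_max_left _ _, le_max_left _ _⟩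
      ⟨max_le (le_iff'.mp ha).1 (le_iff'.mp hz).1, max_le (le_iff'.mp ha).2 (le_iff'.mp hz).2⟩⟩

lemma Xc_jp (hconv : PosetConvex J) {a z y : ↥J} (ha : a ≤ y) (hz : z ≤ y) :
    Xc (jp hconv ha hz) = max (Xc a) (Xc z) := rfl

lemma Yc_jp (hconv : PosetConvex J) {a z y : ↥J} (ha : a ≤ y) (hz : z ≤ y) :
    Yc (jp hconv ha hz) = max (Yc a) (Yc z) := rfl

lemma le_jp_left (hconv : PosetConvex J) {a z y : ↥J} (ha : a ≤ y) (hz : z ≤ y) :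
    a ≤ jp hconv ha hz := ⟨le_max_left _ _, le_max_left _ _⟩

lemma le_jp_right (hconv : PosetConvex J) {a z y : ↥J} (ha : a ≤ y) (hz : z ≤ y) :
    z ≤ jp hconv ha hz := ⟨le_max_right _ _, le_max_right _ _⟩

lemma jp_le (hconv : PosetConvex J) {a z y : ↥J} (ha : a ≤ y) (hz : z ≤ y) :
    jp hconv ha hz ≤ y :=
  ⟨max_le (le_iff'.mp ha).1 (le_iff'.mp hz).1, max_le (le_iff'.mp ha).2 (le_iff'.mp hz).2⟩

/-- The meet of `a` and `z`, living in `J` thanks to convexity. -/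
def mp (hconv : PosetConvex J) {y a z : ↥J} (ha : y ≤ a) (hz : y ≤ z) : ↥J :=
  ⟨(min (Xc a) (Xc z), min (Yc a) (Yc z)),
    hconv y.1 y.2 a.1 a.2 _
      ⟨le_min (le_iff'.mp ha).1 (le_iff'.mp hz).1, le_min (le_iff'.mp ha).2 (le_iff'.mp hz).2⟩
      ⟨min_le_left _ _, min_le_left _ _⟩⟩

lemma Xc_mp (hconv : PosetConvex J) {y a z : ↥J} (ha : y ≤ a) (hz : y ≤ z) :
    Xc (mp hconv ha hz) = min (Xc a) (Xc z) := rfl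

lemma Yc_mp (hconv : PosetConvex J) {y a z : ↥J} (ha : y ≤ a) (hz : y ≤ z) :
    Yc (mp hconv ha hz) = min (Yc a) (Yc z) := rfl

lemma mp_le_left (hconv : PosetConvex J) {y a z : ↥J} (ha : y ≤ a) (hz : y ≤ z) :
    mp hconv ha hz ≤ a := ⟨min_le_left _ _, min_le_left _ _⟩

lemma mp_le_right (hconv : PosetConvex J) {y a z : ↥J} (ha : y ≤ a) (hz : y ≤ z) :
    mp hconv ha hz ≤ z := ⟨min_le_right _ _, min_le_right _ _⟩

lemma le_mp (hconv : PosetConvex J) {y a z : ↥J} (ha : y ≤ a) (hz : y ≤ z) :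
    y ≤ mp hconv ha hz :=
  ⟨le_min (le_iff'.mp ha).1 (le_iff'.mp hz).1, le_min (le_iff'.mp ha).2 (le_iff'.mp hz).2⟩

end Plane2

section Alt

variable {F : Type} [Field F] {J : Set (ℝ × ℝ)}
variable (M : PersistenceModule F ↥J)
  (hiso : ∀ (i j : ↥J) (h : i ≤ j), Function.Bijective (M.map h))

lemma alt (hconv : PosetConvex J) (A : Finset ℝ) :
    ∀ {a b : ↥J} (p : Zigzag (↥J) a b), Coords A p →
    DF p ∨ ∃ p' : Zigzag (↥J) a b, zigzagMap M hiso p' = zigzagMap M hiso p ∧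
      Coords A p' ∧ mu A p' < mu A p
  | _, _, .single a, _ => Or.inl trivial
  | _, _, @Zigzag.consLe _ _ a y _ h (.single _), hC => by
    by_cases hay : a = y
    · subst hay
      refine Or.inr ⟨.single a, ?_, hC.2, by simp⟩
      rw [zm_consLe, zm_single, LinearMap.id_comp, map_refl]
    · exact Or.inl hay
  | _, _, @Zigzag.consGe _ _ a y _ h (.single _), hC => by
    by_cases hay : a = y
    · subst hay
      refine Or.inr ⟨.single a, ?_, hC.2, by simp⟩
      rw [zm_consGe, zm_single, LinearMap.id_comp, pinv_refl]
    · exact Or.inl hay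
  | _, _, @Zigzag.consLe _ _ a y _ h (@Zigzag.consLe _ _ _ z _ h2 q), hC => by
    rcases alt hconv A (Zigzag.consLe h2 q) hC.2 with _ | ⟨p', hzm, hcp', hmu⟩
    · refine Or.inr ⟨.consLe (h.trans h2) q, ?_, ⟨hC.1, hC.2.2⟩, ?_⟩
      · ext x
        simp only [zm_consLe, LinearMap.comp_apply]
        rw [map_map_apply]
      · have m1 := hgt_mono (A := A) h
        have m2 := hgt_mono (A := A) h2
        simp only [mu_consLe]
        omega
    · refine Or.inr ⟨.consLe h p', ?_, ⟨hC.1, hcp'⟩, ?_⟩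
      · rw [zm_consLe, zm_consLe, hzm]
      · simp only [mu_consLe] at *
        omega
  | _, _, @Zigzag.consGe _ _ a y _ h (@Zigzag.consGe _ _ _ z _ h2 q), hC => by
    rcases alt hconv A (Zigzag.consGe h2 q) hC.2 with _ | ⟨p', hzm, hcp', hmu⟩
    · refine Or.inr ⟨.consGe (h2.trans h) q, ?_, ⟨hC.1, hC.2.2⟩, ?_⟩
      · ext x
        simp only [zm_consGe, LinearMap.comp_apply]
        rw [pinv_pinv_apply]
      · have m1 := hgt_mono (A := A) h
        have m2 := hgt_mono (A := A) h2
        simp only [mu_consGe]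
        omega
    · refine Or.inr ⟨.consGe h p', ?_, ⟨hC.1, hcp'⟩, ?_⟩
      · rw [zm_consGe, zm_consGe, hzm]
      · simp only [mu_consGe] at *
        omega
  | _, _, @Zigzag.consLe _ _ a y _ h (@Zigzag.consGe _ _ _ z _ h2 q), hC => by
    rcases alt hconv A (Zigzag.consGe h2 q) hC.2 with hdf | ⟨p', hzm, hcp', hmu⟩
    · by_cases hay : a = y
      · subst hay
        refine Or.inr ⟨.consGe h2 q, ?_, hC.2, ?_⟩
        · rw [zm_consLe, map_refl, LinearMap.comp_id]
        · simp only [mu_consLe, mu_consGe]; omega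
      · by_cases hzy : z = y
        · subst hzy
          refine Or.inr ⟨.consLe h q, ?_, ⟨hC.1, hC.2.2⟩, ?_⟩
          · rw [zm_consLe, zm_consLe, zm_consGe, pinv_refl, LinearMap.comp_id]
          · simp only [mu_consLe, mu_consGe]; omega
        · by_cases htaut : UpTaut a y z
          · exact Or.inl ⟨hay, hzy, htaut, hdf⟩
          · have hzA := coords_start A q hC.2.2
            have haA : Xc a ∈ A ∧ Yc a ∈ A := hC.1
            have hyA : Xc y ∈ A ∧ Yc y ∈ A := hC.2.1
            have hjX : Xc (jp hconv h h2) ∈ A := by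
              rcases max_choice (Xc a) (Xc z) with hm | hm <;> rw [Xc_jp, hm]
              exacts [haA.1, hzA.1]
            have hjY : Yc (jp hconv h h2) ∈ A := by
              rcases max_choice (Yc a) (Yc z) with hm | hm <;> rw [Yc_jp, hm]
              exacts [haA.2, hzA.2]
            have hjy : jp hconv h h2 ≠ y := by
              intro he
              exact htaut ⟨by rw [← he]; rfl, by rw [← he]; rfl⟩
            refine Or.inr ⟨.consLe (le_jp_left hconv h h2) (.consGe (le_jp_right hconv h h2) q),
              ?_, ⟨haA, ⟨hjX, hjY⟩, hC.2.2⟩, ?_⟩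
            · exact (zm_peak_move M hiso h h2 _ _ (jp_le hconv h h2) q).symm
            · have s1 := hgt_strict (A := A) (jp_le hconv h h2) hjy hjX hjY
              have m1 := hgt_mono (A := A) (le_jp_left hconv h h2)
              have m2 := hgt_mono (A := A) (le_jp_right hconv h h2)
              simp only [mu_consLe, mu_consGe]
              omega
    · refine Or.inr ⟨.consLe h p', ?_, ⟨hC.1, hcp'⟩, ?_⟩
      · rw [zm_consLe, zm_consLe, hzm]
      · simp only [mu_consLe] at *
        omega
  | _, _, @Zigzag.consGe _ _ a y _ h (@Zigzag.consLe _ _ _ z _ h2 q), hC => by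
    rcases alt hconv A (Zigzag.consLe h2 q) hC.2 with hdf | ⟨p', hzm, hcp', hmu⟩
    · by_cases hay : a = y
      · subst hay
        refine Or.inr ⟨.consLe h2 q, ?_, hC.2, ?_⟩
        · rw [zm_consGe, pinv_refl, LinearMap.comp_id]
        · simp only [mu_consLe, mu_consGe]; omega
      · by_cases hzy : z = y
        · subst hzy
          refine Or.inr ⟨.consGe h q, ?_, ⟨hC.1, hC.2.2⟩, ?_⟩
          · rw [zm_consGe, zm_consGe, zm_consLe, map_refl, LinearMap.comp_id]
          · simp only [mu_consLe, mu_consGe]; omega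
        · by_cases htaut : DnTaut a y z
          · exact Or.inl ⟨hay, hzy, htaut, hdf⟩
          · have hzA := coords_start A q hC.2.2
            have haA : Xc a ∈ A ∧ Yc a ∈ A := hC.1
            have hyA : Xc y ∈ A ∧ Yc y ∈ A := hC.2.1
            have hmX : Xc (mp hconv h h2) ∈ A := by
              rcases min_choice (Xc a) (Xc z) with hm | hm <;> rw [Xc_mp, hm]
              exacts [haA.1, hzA.1]
            have hmY : Yc (mp hconv h h2) ∈ A := by
              rcases min_choice (Yc a) (Yc z) with hm | hm <;> rw [Yc_mp, hm]
              exacts [haA.2, hzA.2]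
            have hmy : y ≠ mp hconv h h2 := by
              intro he
              exact htaut ⟨by rw [he]; rfl, by rw [he]; rfl⟩
            refine Or.inr ⟨.consGe (mp_le_left hconv h h2) (.consLe (mp_le_right hconv h h2) q),
              ?_, ⟨haA, ⟨hmX, hmY⟩, hC.2.2⟩, ?_⟩
            · exact (zm_valley_move M hiso h h2 _ (le_mp hconv h h2) _ q).symm
            · have s1 := hgt_strict (A := A) (le_mp hconv h h2) hmy hyA.1 hyA.2
              have m1 := hgt_mono (A := A) (mp_le_left hconv h h2)
              have m2 := hgt_mono (A := A) (mp_le_right hconv h h2)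
              simp only [mu_consLe, mu_consGe]
              omega
    · refine Or.inr ⟨.consGe h p', ?_, ⟨hC.1, hcp'⟩, ?_⟩
      · rw [zm_consGe, zm_consGe, hzm]
      · simp only [mu_consGe] at *
        omega

end Alt

section Drift

variable {J : Set (ℝ × ℝ)}

lemma D2 (f g : ↥J → ℝ)
    (hord : ∀ u w : ↥J, u ≤ w ↔ f u ≤ f w ∧ g u ≤ g w)
    (hUp : ∀ a y z : ↥J, UpTaut a y z → f y = max (f a) (f z) ∧ g y = max (g a) (g z))
    (hDn : ∀ a y z : ↥J, DnTaut a y z → f y = min (f a) (f z) ∧ g y = min (g a) (g z)) :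
    ∀ (n : ℕ), ∀ {v y b : ↥J} (h : v ≤ y) (q : Zigzag (↥J) y b), Zigzag.zlen q ≤ n →
      DF (.consLe h q) → g y ≤ g v →
      (∃ v' : ↥J, (f v < f v' ∧ g v' < g v) ∧ (v' = b ∨ v' ≤ b)) ∨ (v ≤ b ∧ v ≠ b) := by
  intro n
  induction n using Nat.strong_induction_on with
  | _ n ih =>
  intro v y b h q hlen hdf hY
  cases q with
  | single =>
    rw [DF_consLe_single] at hdf
    exact Or.inr ⟨h, hdf⟩
  | consLe h2 r =>
    rw [DF_consLe_consLe] at hdf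
    exact hdf.elim
  | consGe h2 r =>
    rename_i v2
    rw [DF_consLe_consGe] at hdf
    obtain ⟨hvy, hv2y, htaut, hdf2⟩ := hdf
    obtain ⟨hfY, hgY⟩ := hUp v y v2 htaut
    have hvy' := (hord v y).mp h
    have gvy : g y = g v := le_antisymm hY hvy'.2
    have hmax : max (g v) (g v2) = g v := by rw [← hgY]; exact gvy
    have hg2 : g v2 ≤ g v := hmax ▸ le_max_right (g v) (g v2)
    have hf2 : f v < f v2 := by
      by_contra hle
      push_neg at hle
      have hyv : y ≤ v := (hord y v).mpr
        ⟨le_of_eq (hfY.trans (max_eq_left hle)), le_of_eq gvy⟩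
      exact hvy (le_antisymm h hyv)
    have hg2s : g v2 < g v := by
      rcases lt_or_eq_of_le hg2 with hlt | heq
      · exact hlt
      · exfalso
        have hyv2 : y ≤ v2 := (hord y v2).mpr
          ⟨le_of_eq (hfY.trans (max_eq_right hf2.le)), le_of_eq (gvy.trans heq.symm)⟩
        exact hv2y (le_antisymm h2 hyv2)
    cases r with
    | single => exact Or.inl ⟨_, ⟨hf2, hg2s⟩, Or.inl rfl⟩
    | consGe h3 r2 =>
      rw [DF_consGe_consGe] at hdf2
      exact hdf2.elim
    | consLe h3 r2 =>
      rename_i y2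
      rw [DF_consGe_consLe] at hdf2
      obtain ⟨hyv2, hy2v2, hdn, hdf3⟩ := hdf2
      obtain ⟨fmin, gmin⟩ := hDn y v2 y2 hdn
      have hY' : g y2 ≤ g v2 := by
        rcases min_choice (g y) (g y2) with hm | hm
        · exfalso
          rw [hm] at gmin
          rw [gmin] at hg2s
          exact absurd gvy (ne_of_lt hg2s)
        · rw [hm] at gmin
          exact le_of_eq gmin.symm
      simp only [Zigzag.zlen_consGe, Zigzag.zlen_consLe] at hlen
      have hcall := ih (Zigzag.zlen r2 + 1) (by omega) h3 r2 (by omega) hdf3 hY'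
      rcases hcall with ⟨v'', ⟨hf'', hg''⟩, hpos⟩ | ⟨hv2b, hne⟩
      · exact Or.inl ⟨v'', ⟨lt_trans hf2 hf'', lt_trans hg'' hg2s⟩, hpos⟩
      · exact Or.inl ⟨v2, ⟨hf2, hg2s⟩, Or.inr hv2b⟩

lemma no_df_loop {a y : ↥J} (h : a ≤ y) (q : Zigzag (↥J) y a)
    (hdf : DF (.consLe h q)) : False := by
  have hdf0 := hdf
  cases q with
  | single =>
    rw [DF_consLe_single] at hdf
    exact hdf rfl
  | consLe h2 r =>
    rw [DF_consLe_consLe] at hdf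
    exact hdf
  | consGe h2 r =>
    rename_i v1
    rw [DF_consLe_consGe] at hdf
    obtain ⟨hay, hv1y, htaut, _⟩ := hdf
    have hordXY : ∀ u w : ↥J, u ≤ w ↔ Xc u ≤ Xc w ∧ Yc u ≤ Yc w := fun u w => le_iff'
    have hordYX : ∀ u w : ↥J, u ≤ w ↔ Yc u ≤ Yc w ∧ Xc u ≤ Xc w := by
      intro u w
      rw [le_iff']
      exact and_comm
    have finish : ∀ (f g : ↥J → ℝ),
        (∀ u w : ↥J, u ≤ w ↔ f u ≤ f w ∧ g u ≤ g w) →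
        (∀ a' y' z' : ↥J, UpTaut a' y' z' → f y' = max (f a') (f z') ∧ g y' = max (g a') (g z')) →
        (∀ a' y' z' : ↥J, DnTaut a' y' z' → f y' = min (f a') (f z') ∧ g y' = min (g a') (g z')) →
        g y ≤ g a → False := by
      intro f g hord hUp hDn hY
      rcases D2 f g hord hUp hDn (Zigzag.zlen (Zigzag.consGe h2 r)) h
        (Zigzag.consGe h2 r) le_rfl hdf0 hY with ⟨v', ⟨hf, hg⟩, hpos⟩ | ⟨_, hne⟩
      · rcases hpos with rfl | hle
        · exact lt_irrefl _ hf
        · exact absurd hf (not_lt_of_ge ((hord v' a).mp hle).1)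
      · exact hne rfl
    rcases le_total (Yc v1) (Yc a) with hc | hc
    · exact finish Xc Yc hordXY (fun _ _ _ ht => ht) (fun _ _ _ ht => ht)
        (le_of_eq_of_le htaut.2 (max_le le_rfl hc))
    · rcases le_total (Xc v1) (Xc a) with hc2 | hc2
      · exact finish Yc Xc hordYX (fun _ _ _ ht => ⟨ht.2, ht.1⟩) (fun _ _ _ ht => ⟨ht.2, ht.1⟩)
          (le_of_eq_of_le htaut.1 (max_le le_rfl hc2))
      · refine hv1y ?_
        refine (eq_of_coords ?_ ?_).symm
        · rw [htaut.1]
          exact max_eq_right hc2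
        · rw [htaut.2]
          exact max_eq_right hc

end Drift

section Final

variable {F : Type} [Field F] {J : Set (ℝ × ℝ)}
variable (M : PersistenceModule F ↥J)
  (hiso : ∀ (i j : ↥J) (h : i ≤ j), Function.Bijective (M.map h))

lemma pinv_injective {i j : ↥J} (h : i ≤ j) : Function.Injective (pinv M hiso h) := by
  intro u u' he
  rw [← map_pinv_apply M hiso h u, he, map_pinv_apply]

lemma loop_id (hconv : PosetConvex J) (A : Finset ℝ) :
    ∀ (n : ℕ) {a : ↥J} (p : Zigzag (↥J) a a), Coords A p → mu A p ≤ n →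
      zigzagMap M hiso p = LinearMap.id := by
  intro n
  induction n using Nat.strong_induction_on with
  | _ n ih =>
  intro a p hC hmu
  rcases alt M hiso hconv A p hC with hdf | ⟨p', hzm, hc', hlt⟩
  · cases p with
    | single => rfl
    | consLe h q => exact (no_df_loop h q hdf).elim
    | consGe h q =>
      rename_i x
      cases q with
      | single =>
        rw [DF_consGe_single] at hdf
        exact (hdf rfl).elim
      | consGe h3 q2 =>
        rw [DF_consGe_consGe] at hdf
        exact hdf.elim
      | consLe h3 q2 =>
        rename_i y2
        have hxA : Xc x ∈ A ∧ Yc x ∈ A := coords_start A _ hC.2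
        set r : Zigzag (↥J) x x :=
          (Zigzag.consLe h3 q2).append (.consGe h (.single x)) with hr
        have hCr : Coords A r := coords_append A hC.2 ⟨hC.1, hxA⟩
        have hmur : mu A r = mu A (Zigzag.consGe h (Zigzag.consLe h3 q2)) := by
          rw [hr, mu_append]
          simp only [mu_consLe, mu_consGe, mu_single]
          omega
        rcases alt M hiso hconv A r hCr with hdfr | ⟨r', hzm', hcr', hltr⟩
        · have hre : r = .consLe h3 (q2.append (.consGe h (.single x))) := rfl
          rw [hre] at hdfr
          exact (no_df_loop h3 _ hdfr).elim
        · have hmur' : mu A r' < n := by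
            rw [hmur] at hltr
            omega
          have hid : zigzagMap M hiso r' = LinearMap.id :=
            ih (mu A r') hmur' r' hcr' le_rfl
          have hidr : zigzagMap M hiso r = LinearMap.id := by
            rw [← hzm']; exact hid
          rw [hr, zm_append] at hidr
          have hpt := LinearMap.ext_iff.mp hidr
          simp only [LinearMap.comp_apply, zm_consGe, zm_single, LinearMap.id_comp,
            LinearMap.id_apply] at hpt
          ext x0
          simp only [zm_consGe, LinearMap.comp_apply, LinearMap.id_apply]
          exact pinv_injective M hiso h (hpt (pinv M hiso h x0))
  · have : mu A p' < n := lt_of_lt_of_le hlt hmu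
    rw [← hzm]
    exact ih (mu A p') this p' hc' le_rfl

/-- Finset of all coordinates of vertices of a zigzag. -/
noncomputable def cfin : {a b : ↥J} → Zigzag (↥J) a b → Finset ℝ
  | _, _, .single a => {Xc a, Yc a}
  | _, _, @Zigzag.consLe _ _ a _ _ _ p => insert (Xc a) (insert (Yc a) (cfin p))
  | _, _, @Zigzag.consGe _ _ a _ _ _ p => insert (Xc a) (insert (Yc a) (cfin p))

lemma cfin_single (a : ↥J) : cfin (.single a) = {Xc a, Yc a} := rfl

lemma cfin_consLe {a y b : ↥J} (h : a ≤ y) (p : Zigzag (↥J) y b) :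
    cfin (.consLe h p) = insert (Xc a) (insert (Yc a) (cfin p)) := rfl

lemma cfin_consGe {a y b : ↥J} (h : y ≤ a) (p : Zigzag (↥J) y b) :
    cfin (.consGe h p) = insert (Xc a) (insert (Yc a) (cfin p)) := rfl

lemma coords_mono {A B : Finset ℝ} (hAB : A ⊆ B) :
    ∀ {a b : ↥J} (p : Zigzag (↥J) a b), Coords A p → Coords B p
  | _, _, .single a, hc => ⟨hAB hc.1, hAB hc.2⟩
  | _, _, .consLe h p, hc => ⟨⟨hAB hc.1.1, hAB hc.1.2⟩, coords_mono hAB p hc.2⟩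
  | _, _, .consGe h p, hc => ⟨⟨hAB hc.1.1, hAB hc.1.2⟩, coords_mono hAB p hc.2⟩

lemma coords_cfin : ∀ {a b : ↥J} (p : Zigzag (↥J) a b), Coords (cfin p) p
  | _, _, .single a => by
    rw [Coords_single, cfin_single]
    exact ⟨Finset.mem_insert_self _ _, Finset.mem_insert_of_mem (Finset.mem_singleton_self _)⟩
  | _, _, .consLe h p => by
    rw [Coords_consLe, cfin_consLe]
    exact ⟨⟨Finset.mem_insert_self _ _, Finset.mem_insert_of_mem (Finset.mem_insert_self _ _)⟩,
      coords_mono (fun t ht => Finset.mem_insert_of_mem (Finset.mem_insert_of_mem ht)) p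
        (coords_cfin p)⟩
  | _, _, .consGe h p => by
    rw [Coords_consGe, cfin_consGe]
    exact ⟨⟨Finset.mem_insert_self _ _, Finset.mem_insert_of_mem (Finset.mem_insert_self _ _)⟩,
      coords_mono (fun t ht => Finset.mem_insert_of_mem (Finset.mem_insert_of_mem ht)) p
        (coords_cfin p)⟩

end Final

/-- For `M` on a connected convex `J ⊆ (ℝ,≤)²` with all structure maps
isomorphisms, the composite along a zigzag path from `a` to `b` does not depend on
the choice of path. -/
theorem statement2 (F : Type) [Field F] (J : Set (ℝ × ℝ))
    (hconv : PosetConvex J) (hconn : ZigzagConnected J)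
    (M : PersistenceModule F ↥J)
    (hiso : ∀ (i j : ↥J) (h : i ≤ j), Function.Bijective (M.map h))
    (a b : ↥J) (p q : Zigzag (↥J) a b) :
    zigzagMap M hiso p = zigzagMap M hiso q := by
  have hL : zigzagMap M hiso (p.append q.rev) = LinearMap.id :=
    loop_id M hiso hconv (cfin (p.append q.rev)) (mu (cfin (p.append q.rev)) (p.append q.rev))
      (p.append q.rev) (coords_cfin _) le_rfl
  rw [zm_append] at hL
  have h2 := LinearMap.ext_iff.mp (zm_comp_rev M hiso q)
  have h1 := LinearMap.ext_iff.mp hL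
  simp only [LinearMap.comp_apply, LinearMap.id_apply] at h1 h2
  ext x
  calc zigzagMap M hiso p x
      = zigzagMap M hiso q (zigzagMap M hiso q.rev (zigzagMap M hiso p x)) := (h2 _).symm
    _ = zigzagMap M hiso q x := by rw [h1]
end

section
/- Let J₁ and J₂ be disjoint connected and convex subposets of (ℝ,≤)² and M:(ℝ,≤)²→vect_F a persistence module such that M(i≤j) is an isomorphism whenever i≤j lie in the same Jₖ (k=1,2). If a,a' ∈ J₁ and b,b' ∈ J₂ satisfy a ≤ b and a' ≤ b', then M(b⇝b')∘M(a≤b) = M(a'≤b')∘M(a⇝a'), where a⇝a' is any zigzag path in J₁ and b⇝b' is any zigzag path in J₂. -/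
/-- Restriction of a persistence module to a subset of the parameter poset. -/
def PersistenceModule.restrict {F : Type} [Field F] {P : Type} [Preorder P]
    (M : PersistenceModule F P) (J : Set P) : PersistenceModule F ↥J where
  V i := M.V ↑i
  map {i j} h := M.map (show (i : P) ≤ (j : P) from h)
  map_id i := M.map_id ↑i
  map_comp _ _ := M.map_comp _ _


/-!
Inside a convex subset `J` of a product of two chains, zigzag maps do not depend on the path.
Indeed, call a zigzag bounded if each of its suffixes stays below the join of its endpoints.
Prepending a wedge `x ≤ x ⊔ v ≥ v` to a bounded zigzag from `v` to `y` keeps it bounded unless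
`v` sticks out of `x ⊔ y` in some coordinate; then the next peak shares that coordinate with
`x ⊔ v`, the two peaks are comparable and `v` can be removed. So every loop at `y` is equivalent
to one below `y`, along which the maps into `M y` are transported unchanged.

Any zigzag can also be traded for one inside the box `[x ⊓ y, x ⊔ y]` of its endpoints: a
coordinate is made monotone by interpolating on the steps that jump over a level. Hence `M(x ⇝ y)`
commutes with the structure maps out of points below `x, y` and into points above them, which
gives the square when `a ≤ b'` or `a' ≤ b`. Otherwise, after reversing both paths if necessary,
`a'` is up-left of `a` and `b'` up-left of `b`. Walk from `a` to `a'` with vertical up-steps and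
from `b` to `b'` with horizontal down-steps, keeping the node of the first walk below the node of
the second: if neither walk can advance, a vertical step of the first crosses a horizontal step of
the second, and by convexity the crossing point lies in `J₁ ∩ J₂`.
-/

namespace Zigzag

variable {P : Type} [Preorder P]

def support : ∀ {a b : P}, Zigzag P a b → List P
  | a, _, single _ => [a]
  | a, _, consLe _ p => a :: p.support
  | a, _, consGe _ p => a :: p.support

def Chain (r : P → P → Prop) : ∀ {a b : P}, Zigzag P a b → Prop
  | _, _, single _ => True
  | a, _, consLe (b := b) _ p => r a b ∧ p.Chain r
  | a, _, consGe (b := b) _ p => r a b ∧ p.Chain r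

def reverseAux : ∀ {a b c : P}, Zigzag P a b → Zigzag P a c → Zigzag P b c
  | _, _, _, single _, q => q
  | _, _, _, consLe h p, q => reverseAux p (consGe h q)
  | _, _, _, consGe h p, q => reverseAux p (consLe h q)

def reverse {a b : P} (p : Zigzag P a b) : Zigzag P b a := p.reverseAux (single a)

theorem start_mem_support : ∀ {a b : P} (p : Zigzag P a b), a ∈ p.support
  | _, _, single _ | _, _, consLe _ _ | _, _, consGe _ _ => List.mem_cons_self

theorem end_mem_support : ∀ {a b : P} (p : Zigzag P a b), b ∈ p.support
  | _, _, single _ => List.mem_singleton_self _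
  | _, _, consLe _ p | _, _, consGe _ p => List.mem_cons_of_mem _ p.end_mem_support

theorem mem_support_reverseAux {n : P} :
    ∀ {a b c : P} (p : Zigzag P a b) (q : Zigzag P a c),
      n ∈ (p.reverseAux q).support ↔ n ∈ p.support ∨ n ∈ q.support
  | _, _, _, single _, q => by
      simpa [reverseAux, support] using fun h => h ▸ q.start_mem_support
  | _, _, _, consLe _ p, q | _, _, _, consGe _ p, q => by
      have := p.start_mem_support
      have := q.start_mem_support
      simp only [reverseAux, support, mem_support_reverseAux p, List.mem_cons]
      grind

@[simp] theorem mem_support_reverse {n a b : P} (p : Zigzag P a b) :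
    n ∈ p.reverse.support ↔ n ∈ p.support := by
  simpa [reverse, mem_support_reverseAux, support] using fun h => h ▸ p.start_mem_support

theorem chain_reverseAux {r : P → P → Prop} :
    ∀ {a b c : P} (p : Zigzag P a b) (q : Zigzag P a c),
      p.Chain r → q.Chain (flip r) → (p.reverseAux q).Chain (flip r)
  | _, _, _, single _, _, _, hq => hq
  | _, _, _, consLe _ p, _, hp, hq | _, _, _, consGe _ p, _, hp, hq =>
      chain_reverseAux p _ hp.2 ⟨hp.1, hq⟩

theorem Chain.reverse {r : P → P → Prop} {a b : P} {p : Zigzag P a b} (hp : p.Chain r) :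
    p.reverse.Chain (flip r) :=
  chain_reverseAux p _ hp trivial

theorem Chain.le_and_le {C : Type} [Preorder C] {φ : P → C} :
    ∀ {a b : P} {p : Zigzag P a b}, p.Chain (fun u w => φ w ≤ φ u) →
      ∀ n ∈ p.support, φ b ≤ φ n ∧ φ n ≤ φ a
  | _, _, single _, _, n, hn => by simp_all [support]
  | _, _, consLe _ p, hp, n, hn | _, _, consGe _ p, hp, n, hn => by
      have ih := Chain.le_and_le hp.2
      rcases List.mem_cons.mp hn with rfl | hn
      · exact ⟨(ih _ p.start_mem_support).1.trans hp.1, le_rfl⟩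
      · exact ⟨(ih n hn).1, (ih n hn).2.trans hp.1⟩

theorem exists_cons {a b c : P} (h : a ≤ b ∨ b ≤ a) (q : Zigzag P b c) :
    ∃ p : Zigzag P a c, p.support = a :: q.support ∧
      ∀ r : P → P → Prop, p.Chain r ↔ r a b ∧ q.Chain r := by
  rcases h with h | h
  · exact ⟨consLe h q, rfl, fun _ => Iff.rfl⟩
  · exact ⟨consGe h q, rfl, fun _ => Iff.rfl⟩

end Zigzag

theorem posetConvex_univ {P : Type} [Preorder P] : PosetConvex (Set.univ : Set P) :=
  fun _ _ _ _ _ _ _ => trivial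

namespace PersistenceModule

variable {F : Type} [Field F] {P : Type} [Preorder P] (N : PersistenceModule F P)

@[simp] theorem map_map {i j k : P} (hij : i ≤ j) (hjk : j ≤ k) (t : N.V i) :
    N.map hjk (N.map hij t) = N.map (hij.trans hjk) t :=
  LinearMap.congr_fun (N.map_comp hij hjk) t

@[simp] theorem map_self {i : P} (h : i ≤ i) (t : N.V i) : N.map h t = t :=
  LinearMap.congr_fun (N.map_id i) t

end PersistenceModule

section ZigzagMap

open Zigzag

variable {F : Type} [Field F] {P : Type} [Preorder P] (N : PersistenceModule F P)
  (hN : ∀ (i j : P) (h : i ≤ j), Function.Bijective (N.map h))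

@[simp] theorem zigzagMap_consLe {a b c : P} (h : a ≤ b) (p : Zigzag P b c) :
    zigzagMap N hN (consLe h p) = (zigzagMap N hN p).comp (N.map h) := rfl

@[simp] theorem zigzagMap_consGe {a b c : P} (h : b ≤ a) (p : Zigzag P b c) :
    zigzagMap N hN (consGe h p) =
      (zigzagMap N hN p).comp (LinearEquiv.ofBijective (N.map h) (hN _ _ h)).symm.toLinearMap :=
  rfl

theorem zigzagMap_reverseAux_comp :
    ∀ {a b c : P} (p : Zigzag P a b) (q : Zigzag P a c),
      (zigzagMap N hN (p.reverseAux q)).comp (zigzagMap N hN p) = zigzagMap N hN q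
  | _, _, _, single _, _ => rfl
  | _, _, _, consLe h p, q => by
      rw [reverseAux, zigzagMap_consLe, ← LinearMap.comp_assoc, zigzagMap_reverseAux_comp]
      ext t
      simp
  | _, _, _, consGe h p, q => by
      rw [reverseAux, zigzagMap_consGe, ← LinearMap.comp_assoc, zigzagMap_reverseAux_comp]
      ext t
      simp

theorem zigzagMap_bijective :
    ∀ {a b : P} (p : Zigzag P a b), Function.Bijective (zigzagMap N hN p)
  | _, _, single _ => Function.bijective_id
  | _, _, consLe h p => (zigzagMap_bijective p).comp (hN _ _ h)
  | _, _, consGe _ p => (zigzagMap_bijective p).comp (LinearEquiv.bijective _)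

theorem zigzagMap_reverse_apply {a b : P} (p : Zigzag P a b) (t : N.V a) :
    zigzagMap N hN p.reverse (zigzagMap N hN p t) = t :=
  LinearMap.congr_fun (zigzagMap_reverseAux_comp N hN p _) t

theorem zigzagMap_apply_reverse {a b : P} (p : Zigzag P a b) (t : N.V b) :
    zigzagMap N hN p (zigzagMap N hN p.reverse t) = t := by
  obtain ⟨s, rfl⟩ := (zigzagMap_bijective N hN p).surjective t
  rw [zigzagMap_reverse_apply]

theorem map_comp_zigzagMap_of_forall_le {c : P} :
    ∀ {a b : P} (p : Zigzag P a b), (∀ n ∈ p.support, n ≤ c) → ∀ (ha : a ≤ c) (hb : b ≤ c),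
      (N.map hb).comp (zigzagMap N hN p) = N.map ha
  | _, _, single _, _, _, _ => rfl
  | _, _, consLe h p, hp, _, hb => by
      have hb' := hp _ (List.mem_cons_of_mem _ p.start_mem_support)
      rw [zigzagMap_consLe, ← LinearMap.comp_assoc,
        map_comp_zigzagMap_of_forall_le p (fun n hn => hp n (List.mem_cons_of_mem _ hn)) hb' hb,
        N.map_comp]
  | _, _, consGe h p, hp, _, hb => by
      have hb' := hp _ (List.mem_cons_of_mem _ p.start_mem_support)
      rw [zigzagMap_consGe, ← LinearMap.comp_assoc,
        map_comp_zigzagMap_of_forall_le p (fun n hn => hp n (List.mem_cons_of_mem _ hn)) hb' hb]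
      ext t
      obtain ⟨s, rfl⟩ := (hN _ _ h).surjective t
      simp

theorem zigzagMap_consLe_consGe_of_le {x c e v y : P} (hx : x ≤ c) (hv : v ≤ c) (hce : c ≤ e)
    (p : Zigzag P v y) :
    zigzagMap N hN (consLe hx (consGe hv p)) =
      zigzagMap N hN (consLe (hx.trans hce) (consGe (hv.trans hce) p)) := by
  ext t
  simp only [zigzagMap_consLe, zigzagMap_consGe, LinearMap.comp_apply, LinearEquiv.coe_coe]
  congr 1
  apply (hN _ _ (hv.trans hce)).injective
  rw [← N.map_map hv hce]
  simp

theorem zigzagMap_consGe_consGe {x v w y : P} (hv : v ≤ x) (hw : w ≤ v) (p : Zigzag P w y) :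
    zigzagMap N hN (consGe hv (consGe hw p)) = zigzagMap N hN (consGe (hw.trans hv) p) := by
  ext t
  simp only [zigzagMap_consGe, LinearMap.comp_apply, LinearEquiv.coe_coe]
  congr 1
  apply (hN _ _ (hw.trans hv)).injective
  rw [← N.map_map hw hv]
  simp

theorem zigzagMap_consGe_consLe_of_le {v d e y : P} (hve : v ≤ e) (hvd : v ≤ d) (hde : d ≤ e)
    (p : Zigzag P d y) :
    zigzagMap N hN (consGe hve (consLe hvd p)) = zigzagMap N hN (consGe hde p) := by
  ext t
  simp only [zigzagMap_consLe, zigzagMap_consGe, LinearMap.comp_apply, LinearEquiv.coe_coe]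
  congr 1
  apply (hN _ _ hde).injective
  simp

theorem zigzagMap_consLe_self {v y : P} (h : v ≤ v) (p : Zigzag P v y) :
    zigzagMap N hN (consLe h p) = zigzagMap N hN p := by
  rw [zigzagMap_consLe, N.map_id, LinearMap.comp_id]

theorem zigzagMap_consGe_self {v y : P} (h : v ≤ v) (p : Zigzag P v y) :
    zigzagMap N hN (consGe h p) = zigzagMap N hN p := by
  ext t
  simp only [zigzagMap_consGe, LinearMap.comp_apply, LinearEquiv.coe_coe]
  congr 1
  apply (hN _ _ h).injective
  simp

end ZigzagMap

section Restrict

open Zigzag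

variable {F : Type} [Field F] {P : Type} [Preorder P] (M : PersistenceModule F P) {J : Set P}
  (hiso : ∀ (i j : J) (h : i ≤ j), Function.Bijective ((M.restrict J).map h)) {c : P}

theorem map_zigzagMap_restrict_of_forall_le :
    ∀ {a b : J} (p : Zigzag J a b), (∀ n ∈ p.support, (n : P) ≤ c) →
      ∀ (ha : (a : P) ≤ c) (hb : (b : P) ≤ c) (t : M.V a),
        M.map hb (zigzagMap (M.restrict J) hiso p t) = M.map ha t
  | _, _, single _, _, _, _, _ => rfl
  | _, _, consLe _ p, hp, _, hb, t =>
      have hb' := hp _ (List.mem_cons_of_mem _ p.start_mem_support)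
      (map_zigzagMap_restrict_of_forall_le p (fun n hn => hp n (List.mem_cons_of_mem _ hn)) hb'
        hb _).trans (M.map_map _ _ t)
  | _, _, consGe h p, hp, _, hb, t => by
      have hb' := hp _ (List.mem_cons_of_mem _ p.start_mem_support)
      obtain ⟨s, rfl⟩ := (hiso _ _ h).surjective t
      refine (map_zigzagMap_restrict_of_forall_le p (fun n hn => hp n (List.mem_cons_of_mem _ hn))
        hb' hb _).trans ?_
      exact (congrArg _ (LinearEquiv.ofBijective_symm_apply_apply _ s)).trans
        (M.map_map _ _ s).symm

theorem zigzagMap_restrict_map_of_forall_le :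
    ∀ {a b : J} (p : Zigzag J a b), (∀ n ∈ p.support, c ≤ (n : P)) →
      ∀ (ha : c ≤ (a : P)) (hb : c ≤ (b : P)) (t : M.V c),
        zigzagMap (M.restrict J) hiso p (M.map ha t) = M.map hb t
  | _, _, single _, _, _, _, _ => rfl
  | _, _, consLe _ p, hp, ha, hb, t =>
      have hb' := hp _ (List.mem_cons_of_mem _ p.start_mem_support)
      (congrArg (zigzagMap (M.restrict J) hiso p) (M.map_map ha _ t)).trans
        (zigzagMap_restrict_map_of_forall_le p (fun n hn => hp n (List.mem_cons_of_mem _ hn)) hb'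
          hb t)
  | _, _, consGe h p, hp, _, hb, t =>
      have hb' := hp _ (List.mem_cons_of_mem _ p.start_mem_support)
      have hsymm : (LinearEquiv.ofBijective _ (hiso _ _ h)).symm (M.map _ t) = M.map hb' t :=
        (congrArg _ (M.map_map hb' _ t).symm).trans
          (LinearEquiv.ofBijective_symm_apply_apply _ (M.map hb' t))
      (congrArg (zigzagMap (M.restrict J) hiso p) hsymm).trans
        (zigzagMap_restrict_map_of_forall_le p (fun n hn => hp n (List.mem_cons_of_mem _ hn)) hb'
          hb t)

end Restrict

structure IsCoordinate {P C : Type} [Preorder P] [Preorder C] (φ : P → C) : Prop where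
  monotone : Monotone φ
  le_total_of_eq : ∀ u w : P, φ u = φ w → u ≤ w ∨ w ≤ u
  exists_eq : ∀ u w : P, u ≤ w → ∀ t, φ u ≤ t → t ≤ φ w → ∃ z, u ≤ z ∧ z ≤ w ∧ φ z = t

section Coordinate

open Zigzag

variable {P C : Type} [Preorder P] [LinearOrder C] {J K : Set P} {φ : P → C}

/-- The step `x₁ ≤ x` jumps over the level `t`: descend from the point of `[x₁, x]` at level `t`
to its point at the level of `w`. -/
theorem IsCoordinate.exists_antitone_zigzag_of_le (hφ : IsCoordinate φ) (hJ : PosetConvex J)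
    (hK : PosetConvex K) {x₁ x w y : J} (h : x₁ ≤ x) (hx₁ : (x₁ : P) ∈ K) (hx : (x : P) ∈ K)
    {t : C} (hx₁w : φ x₁ ≤ φ w) (hwt : φ w ≤ t) (htx : t ≤ φ x) (r : Zigzag J w y)
    (hr : r.Chain (fun u w : J => φ w ≤ φ u)) (hrK : ∀ n ∈ r.support, ↑n ∈ K) :
    ∃ z : J, φ z = t ∧ ∃ q : Zigzag J z y,
      q.Chain (fun u w : J => φ w ≤ φ u) ∧ ∀ n ∈ q.support, ↑n ∈ K := by
  obtain ⟨z₁, hx₁z₁, hz₁x, hz₁⟩ := hφ.exists_eq _ _ h t (hx₁w.trans hwt) htx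
  obtain ⟨z₂, hx₁z₂, hz₂z₁, hz₂⟩ := hφ.exists_eq _ _ hx₁z₁ _ hx₁w (hwt.trans_eq hz₁.symm)
  have hz₁J := hJ _ x₁.2 _ x.2 _ hx₁z₁ hz₁x
  have hz₂J := hJ _ x₁.2 _ hz₁J _ hx₁z₂ hz₂z₁
  have hz₁K := hK _ hx₁ _ hx _ hx₁z₁ hz₁x
  obtain ⟨q, hq, hqc⟩ :=
    exists_cons (a := (⟨z₂, hz₂J⟩ : J)) (b := w) (hφ.le_total_of_eq _ _ hz₂) r
  refine ⟨⟨z₁, hz₁J⟩, hz₁, consGe (show z₂ ≤ z₁ from hz₂z₁) q, ?_, ?_⟩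
  · exact show _ ∧ _ from ⟨hz₂.trans_le (hwt.trans_eq hz₁.symm), (hqc _).2 ⟨hz₂.ge, hr⟩⟩
  simp only [support, hq, List.mem_cons, forall_eq_or_imp]
  exact ⟨hz₁K, hK _ hx₁ _ hz₁K _ hx₁z₂ hz₂z₁, hrK⟩

theorem IsCoordinate.exists_antitone_zigzag_of_level (hφ : IsCoordinate φ) (hJ : PosetConvex J)
    (hK : PosetConvex K) :
    ∀ {x y : J} (p : Zigzag J x y), (∀ n ∈ p.support, ↑n ∈ K) →
      ∀ t, φ y ≤ t → t ≤ φ x → ∃ z : J, φ z = t ∧ ∃ q : Zigzag J z y,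
        q.Chain (fun u w : J => φ w ≤ φ u) ∧ ∀ n ∈ q.support, ↑n ∈ K
  | _, _, single x, hp, t, h1, h2 => ⟨x, (le_antisymm h2 h1).symm, single x, trivial, hp⟩
  | _, _, consLe h p, hp, t, h1, h2 =>
      hφ.exists_antitone_zigzag_of_level hJ hK p (fun n hn => hp n (List.mem_cons_of_mem _ hn)) t
        h1 (h2.trans (hφ.monotone h))
  | x, y, consGe (b := x₁) h p, hp, t, h1, h2 => by
      have hpK : ∀ n ∈ p.support, ↑n ∈ K := fun n hn => hp n (List.mem_cons_of_mem _ hn)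
      have ih := hφ.exists_antitone_zigzag_of_level hJ hK p hpK
      by_cases ht : t ≤ φ x₁
      · exact ih t h1 ht
      have hx₁K := hpK x₁ p.start_mem_support
      have hxK := hp x (List.mem_cons_self ..)
      rcases le_total (φ y) (φ x₁) with hy | hy
      · obtain ⟨w, hw, r, hr, hrK⟩ := ih _ hy le_rfl
        exact hφ.exists_antitone_zigzag_of_le hJ hK h hx₁K hxK hw.ge
          (hw.trans_le (not_le.1 ht).le) h2 r hr hrK
      · exact hφ.exists_antitone_zigzag_of_le hJ hK h hx₁K hxK hy h1 h2 (single y) trivial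
          (by simpa [support] using hpK y p.end_mem_support)

theorem IsCoordinate.exists_antitone_zigzag (hφ : IsCoordinate φ) (hJ : PosetConvex J)
    (hK : PosetConvex K) {x y : J} (p : Zigzag J x y) (hp : ∀ n ∈ p.support, ↑n ∈ K)
    (hxy : φ y ≤ φ x) :
    ∃ q : Zigzag J x y, q.Chain (fun u w : J => φ w ≤ φ u) ∧ ∀ n ∈ q.support, ↑n ∈ K := by
  obtain ⟨z, hz, r, hr, hrK⟩ := hφ.exists_antitone_zigzag_of_level hJ hK p hp _ hxy le_rfl
  obtain ⟨q, hq, hqc⟩ := exists_cons (a := x) (b := z) (hφ.le_total_of_eq _ _ hz.symm) r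
  refine ⟨q, (hqc _).2 ⟨hz.le, hr⟩, ?_⟩
  simp only [hq, List.mem_cons, forall_eq_or_imp]
  exact ⟨hp x p.start_mem_support, hrK⟩

theorem IsCoordinate.exists_zigzag_between (hφ : IsCoordinate φ) (hJ : PosetConvex J)
    (hK : PosetConvex K) {x y : J} (p : Zigzag J x y) (hp : ∀ n ∈ p.support, ↑n ∈ K) :
    ∃ q : Zigzag J x y, ∀ n ∈ q.support, ↑n ∈ K ∧ φ x ⊓ φ y ≤ φ n ∧ φ n ≤ φ x ⊔ φ y := by
  rcases le_total (φ y) (φ x) with h | h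
  · obtain ⟨q, hq, hqK⟩ := hφ.exists_antitone_zigzag hJ hK p hp h
    exact ⟨q, fun n hn => ⟨hqK n hn, inf_le_right.trans (hq.le_and_le n hn).1,
      (hq.le_and_le n hn).2.trans le_sup_left⟩⟩
  · obtain ⟨q, hq, hqK⟩ := hφ.exists_antitone_zigzag hJ hK p.reverse
      (fun n hn => hp n ((mem_support_reverse p).1 hn)) h
    refine ⟨q.reverse, fun n hn => ?_⟩
    rw [mem_support_reverse] at hn
    exact ⟨hqK n hn, inf_le_left.trans (hq.le_and_le n hn).1,
      (hq.le_and_le n hn).2.trans le_sup_right⟩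

end Coordinate

namespace Prod

variable {A B : Type} [LinearOrder A] [LinearOrder B]

theorem le_total_of_fst_eq {u w : A × B} (h : u.1 = w.1) : u ≤ w ∨ w ≤ u :=
  (le_total u.2 w.2).imp (fun h2 => Prod.le_def.2 ⟨h.le, h2⟩) (fun h2 => Prod.le_def.2 ⟨h.ge, h2⟩)

theorem le_total_of_snd_eq {u w : A × B} (h : u.2 = w.2) : u ≤ w ∨ w ≤ u :=
  (le_total u.1 w.1).imp (fun h1 => Prod.le_def.2 ⟨h1, h.le⟩) (fun h1 => Prod.le_def.2 ⟨h1, h.ge⟩)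

theorem isCoordinate_fst : IsCoordinate (Prod.fst : A × B → A) where
  monotone := monotone_fst
  le_total_of_eq _ _ := le_total_of_fst_eq
  exists_eq _ w huw t hu hw :=
    ⟨(t, w.2), Prod.le_def.2 ⟨hu, huw.2⟩, Prod.le_def.2 ⟨hw, le_rfl⟩, rfl⟩

theorem isCoordinate_snd : IsCoordinate (Prod.snd : A × B → B) where
  monotone := monotone_snd
  le_total_of_eq _ _ := le_total_of_snd_eq
  exists_eq u _ huw t hu hw :=
    ⟨(u.1, t), Prod.le_def.2 ⟨le_rfl, hu⟩, Prod.le_def.2 ⟨huw.1, hw⟩, rfl⟩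

/-- `x ⊔ v` and `d` share the coordinate in which `v` sticks out of `x ⊔ y`. -/
theorem le_total_sup_of_not_le_sup {x y v d : A × B} (hv : ¬v ≤ x ⊔ y) (hvd : v ≤ d)
    (hd : d ≤ v ⊔ y) : x ⊔ v ≤ d ∨ d ≤ x ⊔ v := by
  rw [Prod.le_def] at hv hvd hd
  simp only [Prod.fst_sup, Prod.snd_sup, le_sup_iff, not_and_or, not_or, not_le] at hv hd
  rcases hv with ⟨hx, hy⟩ | ⟨hx, hy⟩
  · refine le_total_of_fst_eq ?_
    rw [Prod.fst_sup, sup_eq_right.2 hx.le]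
    exact le_antisymm hvd.1 (hd.1.resolve_right (fun h => (hy.trans_le hvd.1).not_ge h))
  · refine le_total_of_snd_eq ?_
    rw [Prod.snd_sup, sup_eq_right.2 hx.le]
    exact le_antisymm hvd.2 (hd.2.resolve_right (fun h => (hy.trans_le hvd.2).not_ge h))

theorem le_of_not_le_of_not_le {x x₁ y y₁ : A × B} (hxx₁ : x ≤ x₁) (hx₁ : x₁.1 ≤ x.1)
    (hy₁y : y₁ ≤ y) (hy₁ : y.2 ≤ y₁.2) (hxy : x ≤ y) (h₁ : ¬x₁ ≤ y) (h₂ : ¬x ≤ y₁) :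
    y₁ ≤ x₁ := by
  rw [Prod.le_def] at *
  rw [not_and_or, not_le, not_le] at h₁ h₂
  constructor
  · rcases h₂ with h₂ | h₂ <;> order
  · rcases h₁ with h₁ | h₁ <;> order

end Prod

namespace Zigzag

variable {L : Type} [Lattice L] {J : Set L}

/-- Every suffix of the zigzag stays below the join of its own endpoints. -/
def SupBounded : ∀ {x y : J}, Zigzag J x y → Prop
  | _, _, single _ => True
  | x, y, consLe (b := b) _ p => (b : L) ≤ ↑x ⊔ ↑y ∧ p.SupBounded
  | x, y, consGe (b := b) _ p => (b : L) ≤ ↑x ⊔ ↑y ∧ p.SupBounded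

theorem SupBounded.le_sup :
    ∀ {x y : J} {p : Zigzag J x y}, p.SupBounded → ∀ n ∈ p.support, (n : L) ≤ ↑x ⊔ ↑y
  | _, _, single _, _, n, hn => by simp_all [support]
  | _, _, consLe _ p, hp, n, hn | _, _, consGe _ p, hp, n, hn => by
      rcases List.mem_cons.mp hn with rfl | hn
      · exact le_sup_left
      · exact (SupBounded.le_sup hp.2 n hn).trans (sup_le hp.1 le_sup_right)

end Zigzag

section PathIndependence

open Zigzag

variable {F : Type} [Field F] {A B : Type} [LinearOrder A] [LinearOrder B] {J : Set (A × B)}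
  (N : PersistenceModule F J) (hN : ∀ (i j : J) (h : i ≤ j), Function.Bijective (N.map h))

/-- Lower the peak to `x ⊔ v`; if `v` is not below `x ⊔ y`, merge the wedge with the next step. -/
theorem exists_supBounded_consLe_consGe (hJ : PosetConvex J) :
    ∀ {x c v y : J} (hx : x ≤ c) (hv : v ≤ c) (p : Zigzag J v y), p.SupBounded →
      ∃ p' : Zigzag J x y, p'.SupBounded ∧
        zigzagMap N hN p' = zigzagMap N hN (consLe hx (consGe hv p))
  | x, c, v, _, hx, hv, single _, _ => by
      let c' : J := ⟨(x : A × B) ⊔ v, hJ _ x.2 _ c.2 _ le_sup_left (sup_le hx hv)⟩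
      have hx' : x ≤ c' := show (x : A × B) ≤ ↑x ⊔ ↑v from le_sup_left
      have hv' : v ≤ c' := show (v : A × B) ≤ ↑x ⊔ ↑v from le_sup_right
      exact ⟨consLe hx' (consGe hv' (single v)), And.intro le_rfl
        (And.intro (le_sup_right.trans le_sup_left) trivial),
        zigzagMap_consLe_consGe_of_le N hN hx' hv' (show (c' : A × B) ≤ c from sup_le hx hv) _⟩
  | x, c, v, y, hx, hv, consGe hd p, hp => by
      obtain ⟨p', hp', hZ⟩ := exists_supBounded_consLe_consGe hJ hx (hd.trans hv) p hp.2
      refine ⟨p', hp', hZ.trans ?_⟩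
      rw [zigzagMap_consLe, zigzagMap_consLe, zigzagMap_consGe_consGe]
  | x, c, v, y, hx, hv, consLe (b := d) hd p, hp => by
      let c' : J := ⟨(x : A × B) ⊔ v, hJ _ x.2 _ c.2 _ le_sup_left (sup_le hx hv)⟩
      have hx' : x ≤ c' := show (x : A × B) ≤ ↑x ⊔ ↑v from le_sup_left
      have hv' : v ≤ c' := show (v : A × B) ≤ ↑x ⊔ ↑v from le_sup_right
      have hlower := zigzagMap_consLe_consGe_of_le N hN hx' hv'
        (show (c' : A × B) ≤ c from sup_le hx hv) (consLe hd p)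
      by_cases hvb : (v : A × B) ≤ ↑x ⊔ ↑y
      · exact ⟨consLe hx' (consGe hv' (consLe hd p)),
          And.intro (sup_le le_sup_left hvb) (And.intro (le_sup_right.trans le_sup_left) hp),
          hlower⟩
      have hmem : (c' : A × B) ⊔ d ∈ J := by
        rcases Prod.le_total_sup_of_not_le_sup hvb hd hp.1 with h | h
        · exact (sup_eq_right.2 h).symm ▸ d.2
        · exact (sup_eq_left.2 h).symm ▸ c'.2
      let e : J := ⟨_, hmem⟩
      have hce : c' ≤ e := show (c' : A × B) ≤ ↑c' ⊔ ↑d from le_sup_left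
      have hde : d ≤ e := show (d : A × B) ≤ ↑c' ⊔ ↑d from le_sup_right
      obtain ⟨p', hp', hZ⟩ := exists_supBounded_consLe_consGe hJ (hx'.trans hce) hde p hp.2
      refine ⟨p', hp', hZ.trans ?_⟩
      rw [← hlower, zigzagMap_consLe_consGe_of_le N hN hx' hv' hce, zigzagMap_consLe,
        zigzagMap_consLe, zigzagMap_consGe_consLe_of_le]

theorem exists_supBounded (hJ : PosetConvex J) :
    ∀ {x y : J} (p : Zigzag J x y), ∃ p' : Zigzag J x y, p'.SupBounded ∧
      zigzagMap N hN p' = zigzagMap N hN p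
  | _, _, single x => ⟨single x, trivial, rfl⟩
  | _, _, consLe h p => by
      obtain ⟨p₁, hp₁, hZ₁⟩ := exists_supBounded hJ p
      obtain ⟨p', hp', hZ⟩ := exists_supBounded_consLe_consGe N hN hJ h le_rfl p₁ hp₁
      refine ⟨p', hp', hZ.trans ?_⟩
      rw [zigzagMap_consLe, zigzagMap_consLe, zigzagMap_consGe_self, hZ₁]
  | _, _, consGe h p => by
      obtain ⟨p₁, hp₁, hZ₁⟩ := exists_supBounded hJ p
      obtain ⟨p', hp', hZ⟩ := exists_supBounded_consLe_consGe N hN hJ le_rfl h p₁ hp₁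
      refine ⟨p', hp', hZ.trans ?_⟩
      rw [zigzagMap_consLe_self, zigzagMap_consGe, zigzagMap_consGe, hZ₁]

theorem zigzagMap_eq_of_posetConvex (hJ : PosetConvex J) {x y : J} (p q : Zigzag J x y) :
    zigzagMap N hN p = zigzagMap N hN q := by
  obtain ⟨ℓ, hℓ, hZ⟩ := exists_supBounded N hN hJ (p.reverseAux q)
  have hloop : zigzagMap N hN ℓ = LinearMap.id := by
    have h := map_comp_zigzagMap_of_forall_le N hN ℓ (fun n hn => by simpa using hℓ.le_sup n hn)
      le_rfl le_rfl
    rwa [N.map_id, LinearMap.id_comp] at h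
  rw [← zigzagMap_reverseAux_comp N hN p q, ← hZ, hloop, LinearMap.id_comp]

end PathIndependence

section Transport

open Zigzag

variable {A B : Type} [LinearOrder A] [LinearOrder B] {J : Set (A × B)}

theorem exists_zigzag_mem_Icc (hJ : PosetConvex J) {x y : J} (p : Zigzag J x y) :
    ∃ q : Zigzag J x y, ∀ n ∈ q.support, (n : A × B) ∈ Set.Icc (↑x ⊓ ↑y) (↑x ⊔ ↑y) := by
  obtain ⟨q₁, hq₁⟩ :=
    Prod.isCoordinate_fst.exists_zigzag_between hJ posetConvex_univ p (fun _ _ => trivial)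
  let K : Set (A × B) :=
    {n | (x : A × B).1 ⊓ (y : A × B).1 ≤ n.1 ∧ n.1 ≤ (x : A × B).1 ⊔ (y : A × B).1}
  have hK : PosetConvex K := fun i hi k hk j hij hjk => ⟨hi.1.trans hij.1, hjk.1.trans hk.2⟩
  obtain ⟨q, hq⟩ := Prod.isCoordinate_snd.exists_zigzag_between hJ hK q₁ (fun n hn => (hq₁ n hn).2)
  exact ⟨q, fun n hn => ⟨Prod.le_def.2 ⟨(hq n hn).1.1, (hq n hn).2.1⟩,
    Prod.le_def.2 ⟨(hq n hn).1.2, (hq n hn).2.2⟩⟩⟩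

variable {F : Type} [Field F] (M : PersistenceModule F (A × B))
  (hiso : ∀ (i j : J) (h : i ≤ j), Function.Bijective ((M.restrict J).map h)) {c : A × B}

theorem map_zigzagMap_restrict (hJ : PosetConvex J) {x y : J} (p : Zigzag J x y)
    (hx : (x : A × B) ≤ c) (hy : (y : A × B) ≤ c) (t : M.V x) :
    M.map hy (zigzagMap (M.restrict J) hiso p t) = M.map hx t := by
  obtain ⟨q, hq⟩ := exists_zigzag_mem_Icc hJ p
  rw [zigzagMap_eq_of_posetConvex (M.restrict J) hiso hJ p q]
  exact map_zigzagMap_restrict_of_forall_le M hiso q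
    (fun n hn => (hq n hn).2.trans (sup_le hx hy)) hx hy t

theorem zigzagMap_restrict_map (hJ : PosetConvex J) {x y : J} (p : Zigzag J x y)
    (hx : c ≤ (x : A × B)) (hy : c ≤ (y : A × B)) (t : M.V c) :
    zigzagMap (M.restrict J) hiso p (M.map hx t) = M.map hy t := by
  obtain ⟨q, hq⟩ := exists_zigzag_mem_Icc hJ p
  rw [zigzagMap_eq_of_posetConvex (M.restrict J) hiso hJ p q]
  exact zigzagMap_restrict_map_of_forall_le M hiso q
    (fun n hn => (le_inf hx hy).trans (hq n hn).1) hx hy t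

end Transport

theorem inf_mem_inter {L : Type} [Lattice L] {J₁ J₂ : Set L} (hJ₁ : PosetConvex J₁)
    (hJ₂ : PosetConvex J₂) {x x₁ y y₁ : L} (hx : x ∈ J₁) (hx₁ : x₁ ∈ J₁) (hy : y ∈ J₂)
    (hy₁ : y₁ ∈ J₂) (hxx₁ : x ≤ x₁) (hy₁y : y₁ ≤ y) (hxy : x ≤ y) (hy₁x₁ : y₁ ≤ x₁) :
    x₁ ⊓ y ∈ J₁ ∩ J₂ :=
  ⟨hJ₁ _ hx _ hx₁ _ (le_inf hxx₁ hxy) inf_le_left,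
    hJ₂ _ hy₁ _ hy _ (le_inf hy₁x₁ hy₁y) inf_le_right⟩

section Squares

open Zigzag

variable {F : Type} [Field F] {A B : Type} [LinearOrder A] [LinearOrder B] {J₁ J₂ : Set (A × B)}
  (M : PersistenceModule F (A × B))
  (hiso₁ : ∀ (i j : J₁) (h : i ≤ j), Function.Bijective ((M.restrict J₁).map h))
  (hiso₂ : ∀ (i j : J₂) (h : i ≤ j), Function.Bijective ((M.restrict J₂).map h))
  {a' : J₁} {b' : J₂} (hab' : (a' : A × B) ≤ b')

local notation "Z₁" => zigzagMap (M.restrict J₁) hiso₁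
local notation "Z₂" => zigzagMap (M.restrict J₂) hiso₂

theorem square_of_le_or_le (hJ₁ : PosetConvex J₁) (hJ₂ : PosetConvex J₂) {a : J₁} {b : J₂}
    (hab : (a : A × B) ≤ b) (p : Zigzag J₁ a a') (q : Zigzag J₂ b b')
    (h : (a : A × B) ≤ b' ∨ (a' : A × B) ≤ b) (t : M.V a) :
    Z₂ q (M.map hab t) = M.map hab' (Z₁ p t) := by
  rcases h with h | h
  · rw [zigzagMap_restrict_map M hiso₂ hJ₂ q hab h, map_zigzagMap_restrict M hiso₁ hJ₁ p h hab']
  · exact (congrArg (Z₂ q) (map_zigzagMap_restrict M hiso₁ hJ₁ p hab h t).symm).trans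
      (zigzagMap_restrict_map M hiso₂ hJ₂ q h hab' _)

theorem square_of_square_left {x x₁ : J₁} {y : J₂} (hxy : (x : A × B) ≤ y)
    (hx₁y : (x₁ : A × B) ≤ y) (s : Zigzag J₁ x x₁) (hs : ∀ n ∈ s.support, (n : A × B) ≤ y)
    (p : Zigzag J₁ x₁ a') (q : Zigzag J₂ y b')
    (h : ∀ t, Z₂ q (M.map hx₁y t) = M.map hab' (Z₁ p t)) (t : M.V x) :
    Z₂ q (M.map hxy t) = M.map hab' (Z₁ p (Z₁ s t)) :=
  (congrArg (Z₂ q) (map_zigzagMap_restrict_of_forall_le M hiso₁ s hs hxy hx₁y t).symm).trans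
    (h _)

theorem square_of_square_right {x : J₁} {y y₁ : J₂} (hxy : (x : A × B) ≤ y)
    (hxy₁ : (x : A × B) ≤ y₁) (s : Zigzag J₂ y y₁) (hs : ∀ n ∈ s.support, (x : A × B) ≤ n)
    (p : Zigzag J₁ x a') (q : Zigzag J₂ y₁ b')
    (h : ∀ t, Z₂ q (M.map hxy₁ t) = M.map hab' (Z₁ p t)) (t : M.V x) :
    Z₂ q (Z₂ s (M.map hxy t)) = M.map hab' (Z₁ p t) :=
  (congrArg (Z₂ q) (zigzagMap_restrict_map_of_forall_le M hiso₂ s hs hxy hxy₁ t)).trans (h t)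

/-- One of the two walks can always advance: otherwise the vertical step `x ≤ x₁` crosses the
horizontal step `y₁ ≤ y`, at a point of `J₁ ∩ J₂`. -/
theorem square_of_chain_consLe (hJ₁ : PosetConvex J₁) (hJ₂ : PosetConvex J₂)
    (hdisj : Disjoint J₁ J₂) {x x₁ : J₁} (hxx₁ : x ≤ x₁) (hx₁ : (x₁ : A × B).1 ≤ (x : A × B).1)
    (p : Zigzag J₁ x₁ a')
    (ih : ∀ {y : J₂} (q : Zigzag J₂ y b'), q.Chain (fun u w : J₂ => (u : A × B).2 ≤ (w : A × B).2) →
      ∀ (hxy : (x₁ : A × B) ≤ y) (t : M.V x₁), Z₂ q (M.map hxy t) = M.map hab' (Z₁ p t)) :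
    ∀ {y : J₂} (q : Zigzag J₂ y b'), q.Chain (fun u w : J₂ => (u : A × B).2 ≤ (w : A × B).2) →
      ∀ (hxy : (x : A × B) ≤ y) (t : M.V x),
        Z₂ q (M.map hxy t) = M.map hab' (Z₁ (consLe hxx₁ p) t)
  | _, single _, _, hxy, t => square_of_le_or_le M hiso₁ hiso₂ hab' hJ₁ hJ₂ hxy _ _ (Or.inl hxy) t
  | y, consLe (b := y₁) g q, hq, hxy, t =>
      square_of_square_right M hiso₁ hiso₂ hab' hxy (hxy.trans g) (consLe g (single y₁))
        (by simpa [support] using And.intro hxy (hxy.trans g)) _ q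
        (square_of_chain_consLe hJ₁ hJ₂ hdisj hxx₁ hx₁ p ih q hq.2 _) t
  | y, consGe (b := y₁) g q, hq, hxy, t => by
      by_cases h₁ : (x₁ : A × B) ≤ y
      · exact square_of_square_left M hiso₁ hiso₂ hab' hxy h₁ (consLe hxx₁ (single x₁))
          (by simpa [support] using And.intro hxy h₁) p _ (ih _ hq h₁) t
      by_cases h₂ : (x : A × B) ≤ y₁
      · exact square_of_square_right M hiso₁ hiso₂ hab' hxy h₂ (consGe g (single y₁))
          (by simpa [support] using And.intro hxy h₂) _ q
          (square_of_chain_consLe hJ₁ hJ₂ hdisj hxx₁ hx₁ p ih q hq.2 h₂) t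
      have hcross := inf_mem_inter hJ₁ hJ₂ x.2 x₁.2 y.2 y₁.2 hxx₁ g hxy
        (Prod.le_of_not_le_of_not_le hxx₁ hx₁ g hq.1 hxy h₁ h₂)
      exact absurd hcross.2 (Set.disjoint_left.1 hdisj hcross.1)

theorem square_of_chain (hJ₁ : PosetConvex J₁) (hJ₂ : PosetConvex J₂) (hdisj : Disjoint J₁ J₂) :
    ∀ {x : J₁} (p : Zigzag J₁ x a'), p.Chain (fun u w : J₁ => (w : A × B).1 ≤ (u : A × B).1) →
    ∀ {y : J₂} (q : Zigzag J₂ y b'), q.Chain (fun u w : J₂ => (u : A × B).2 ≤ (w : A × B).2) →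
      ∀ (hxy : (x : A × B) ≤ y) (t : M.V x), Z₂ q (M.map hxy t) = M.map hab' (Z₁ p t)
  | _, single _, _, _, q, _, hxy, t =>
      square_of_le_or_le M hiso₁ hiso₂ hab' hJ₁ hJ₂ hxy _ q (Or.inl hab') t
  | x, consGe (b := x₁) h p, hp, y, q, hq, hxy, t =>
      have hx₁y : (x₁ : A × B) ≤ y := (Subtype.coe_le_coe.2 h).trans hxy
      square_of_square_left M hiso₁ hiso₂ hab' hxy hx₁y (consGe h (single x₁))
        (by simpa [support] using And.intro hxy hx₁y) p q
        (square_of_chain hJ₁ hJ₂ hdisj p hp.2 q hq _) t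
  | _, consLe h p, hp, _, q, hq, hxy, t =>
      square_of_chain_consLe M hiso₁ hiso₂ hab' hJ₁ hJ₂ hdisj h hp.1 p
        (square_of_chain hJ₁ hJ₂ hdisj p hp.2) q hq hxy t

theorem square_of_square_reverse {a : J₁} {b : J₂} (hab : (a : A × B) ≤ b)
    (p : Zigzag J₁ a a') (q : Zigzag J₂ b b')
    (h : ∀ t, Z₂ q.reverse (M.map hab' t) = M.map hab (Z₁ p.reverse t)) (t : M.V a) :
    Z₂ q (M.map hab t) = M.map hab' (Z₁ p t) :=
  ((congrArg (fun s => Z₂ q (M.map hab s)) (zigzagMap_reverse_apply _ hiso₁ p t).symm).trans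
    (congrArg (Z₂ q) (h _).symm)).trans (zigzagMap_apply_reverse _ hiso₂ q _)

theorem square_of_lt (hJ₁ : PosetConvex J₁) (hJ₂ : PosetConvex J₂) (hdisj : Disjoint J₁ J₂)
    {a : J₁} {b : J₂} (hab : (a : A × B) ≤ b) (p : Zigzag J₁ a a') (q : Zigzag J₂ b b')
    (h₁ : (b' : A × B).1 < (a : A × B).1) (h₂ : (b : A × B).2 < (a' : A × B).2) (t : M.V a) :
    Z₂ q (M.map hab t) = M.map hab' (Z₁ p t) := by
  obtain ⟨p', hp', -⟩ := Prod.isCoordinate_fst.exists_antitone_zigzag hJ₁ posetConvex_univ p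
    (fun _ _ => trivial) (hab'.1.trans h₁.le)
  obtain ⟨q', hq', -⟩ := Prod.isCoordinate_snd.exists_antitone_zigzag hJ₂ posetConvex_univ
    q.reverse (fun _ _ => trivial) (h₂.le.trans hab'.2)
  rw [zigzagMap_eq_of_posetConvex _ hiso₁ hJ₁ p p',
    zigzagMap_eq_of_posetConvex _ hiso₂ hJ₂ q q'.reverse]
  exact square_of_chain M hiso₁ hiso₂ hab' hJ₁ hJ₂ hdisj p' hp' q'.reverse hq'.reverse hab t

end Squares

theorem statement6_general (F : Type) [Field F] (J₁ J₂ : Set (ℝ × ℝ))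
    (hdisj : Disjoint J₁ J₂)
    (hconv₁ : PosetConvex J₁)
    (hconv₂ : PosetConvex J₂)
    (M : PersistenceModule F (ℝ × ℝ))
    (hiso₁ : ∀ (i j : ↥J₁) (h : i ≤ j), Function.Bijective ((M.restrict J₁).map h))
    (hiso₂ : ∀ (i j : ↥J₂) (h : i ≤ j), Function.Bijective ((M.restrict J₂).map h))
    (a a' : ↥J₁) (b b' : ↥J₂)
    (hab : (a : ℝ × ℝ) ≤ (b : ℝ × ℝ)) (hab' : (a' : ℝ × ℝ) ≤ (b' : ℝ × ℝ))
    (p : Zigzag (↥J₁) a a') (q : Zigzag (↥J₂) b b') :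
    (zigzagMap (M.restrict J₂) hiso₂ q).comp (M.map hab)
      = (M.map hab').comp (zigzagMap (M.restrict J₁) hiso₁ p) := by
  ext t
  by_cases h : (a : ℝ × ℝ) ≤ b' ∨ (a' : ℝ × ℝ) ≤ b
  · exact square_of_le_or_le M hiso₁ hiso₂ hab' hconv₁ hconv₂ hab p q h t
  simp only [not_or, Prod.le_def, not_and_or, not_le] at h
  obtain ⟨hab₁, hab₂⟩ := Prod.le_def.1 hab
  obtain ⟨hab'₁, hab'₂⟩ := Prod.le_def.1 hab'
  obtain ⟨h₁ | h₁, h₂ | h₂⟩ := h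
  · linarith
  · exact square_of_lt M hiso₁ hiso₂ hab' hconv₁ hconv₂ hdisj hab p q h₁ h₂ t
  · exact square_of_square_reverse M hiso₁ hiso₂ hab' hab p q
      (square_of_lt M hiso₁ hiso₂ hab hconv₁ hconv₂ hdisj hab' p.reverse q.reverse h₂ h₁) t
  · linarith

/-- Let `J₁, J₂` be disjoint connected convex subposets of `(ℝ,≤)²` and
`M` a persistence module whose structure maps inside each `Jₖ` are isomorphisms.
If `a, a' ∈ J₁`, `b, b' ∈ J₂`, `a ≤ b`, `a' ≤ b'`, then
`M(b ⇝ b') ∘ M(a ≤ b) = M(a' ≤ b') ∘ M(a ⇝ a')`. -/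
theorem statement6 (F : Type) [Field F] (J₁ J₂ : Set (ℝ × ℝ))
    (hdisj : Disjoint J₁ J₂)
    (hconv₁ : PosetConvex J₁) (hconn₁ : ZigzagConnected J₁)
    (hconv₂ : PosetConvex J₂) (hconn₂ : ZigzagConnected J₂)
    (M : PersistenceModule F (ℝ × ℝ))
    (hiso₁ : ∀ (i j : ↥J₁) (h : i ≤ j), Function.Bijective ((M.restrict J₁).map h))
    (hiso₂ : ∀ (i j : ↥J₂) (h : i ≤ j), Function.Bijective ((M.restrict J₂).map h))
    (a a' : ↥J₁) (b b' : ↥J₂)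
    (hab : (a : ℝ × ℝ) ≤ (b : ℝ × ℝ)) (hab' : (a' : ℝ × ℝ) ≤ (b' : ℝ × ℝ))
    (p : Zigzag (↥J₁) a a') (q : Zigzag (↥J₂) b b') :
    (zigzagMap (M.restrict J₂) hiso₂ q).comp (M.map hab)
      = (M.map hab').comp (zigzagMap (M.restrict J₁) hiso₁ p) :=
  statement6_general F J₁ J₂ hdisj hconv₁ hconv₂ M hiso₁ hiso₂ a a' b b' hab hab' p q
end
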